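/- For any points X_1,…,X_n ∈ ℝ^p and Y_1,…,Y_n ∈ ℝ^q, the squared empirical martingale difference divergence is nonnegative: MDD_n²(Y|X) = (1/n²)∑_{i,j=1}^n A_{ij} B_{ij} ≥ 0. -/

import Mathlib

/-!
Double-centring the half squared distances `‖Yᵢ - Yⱼ‖² / 2` gives minus the Gram matrix
`⟪zᵢ, zⱼ⟫` of the centred points `zᵢ = Yᵢ - Ȳ`. That matrix has zero row and column sums, so the
double-centring of the distances `‖Xᵢ - Xⱼ‖` can be dropped, and
`n² MDD_n² = -∑ᵢⱼ ‖Xᵢ - Xⱼ‖ ⟪zᵢ, zⱼ⟫`. Expanding `⟪zᵢ, zⱼ⟫` in an orthonormal basis splits this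
into terms `-∑ᵢⱼ cᵢ cⱼ ‖Xᵢ - Xⱼ‖` with `∑ᵢ cᵢ = 0`, which are nonnegative because the Euclidean
distance is conditionally negative definite: `‖v‖` is a positive multiple of
`∫₀^∞ (1 - exp (-s‖v‖²)) s^(-3/2) ds`, and the Gaussian kernels `exp (-s‖x - y‖²)` are positive
semidefinite, by the Schur product theorem applied to the exponential series of `exp (2s⟪x, y⟫)`.
-/

open MeasureTheory Finset

/-- Double-centering of an `n × n` array of reals:
`r̃_{ij} = r_{ij} − (1/n)∑_k r_{kj} − (1/n)∑_k r_{ik} + (1/n²)∑_{k,ℓ} r_{kℓ}`. -/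
noncomputable def doubleCenter {n : ℕ} (r : Fin n → Fin n → ℝ) (i j : Fin n) : ℝ :=
  r i j - (∑ k, r k j) / n - (∑ k, r i k) / n + (∑ k, ∑ l, r k l) / (n : ℝ) ^ 2

/-- The squared empirical martingale difference divergence
`MDD_n²(Y|X) = (1/n²)∑_{i,j} A_{ij} B_{ij}`, where `A` and `B` are the double-centerings of
`a_{ij} = |X_i − X_j|` and `b_{ij} = (1/2)|Y_i − Y_j|²`. -/
noncomputable def mddnSq {n p q : ℕ}
    (X : Fin n → EuclideanSpace ℝ (Fin p)) (Y : Fin n → EuclideanSpace ℝ (Fin q)) : ℝ :=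
  (∑ i, ∑ j, doubleCenter (fun i j => ‖X i - X j‖) i j
      * doubleCenter (fun i j => ‖Y i - Y j‖ ^ 2 / 2) i j) / (n : ℝ) ^ 2

open Matrix Real Set
open scoped InnerProductSpace Nat

variable {ι : Type*} [Fintype ι] {E : Type*} [NormedAddCommGroup E] [InnerProductSpace ℝ E]
  {F : Type*} [NormedAddCommGroup F] [InnerProductSpace ℝ F]

namespace Matrix

theorem isClosed_setOf_posSemidef : IsClosed {M : Matrix ι ι ℝ | M.PosSemidef} := by
  simp_rw [posSemidef_iff_dotProduct_mulVec, ofPred_and, ofPred_forall]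
  exact (isClosed_eq (by fun_prop) continuous_id).inter <| isClosed_iInter fun x =>
    isClosed_le continuous_const <| continuous_const.dotProduct <|
      continuous_id.matrix_mulVec continuous_const

theorem PosSemidef.of_hasSum {β : Type*} {M : β → Matrix ι ι ℝ} {S : Matrix ι ι ℝ}
    (hM : ∀ m, (M m).PosSemidef) (hS : HasSum M S) : S.PosSemidef := by
  classical
  exact isClosed_setOf_posSemidef.mem_of_tendsto hS
    (.of_forall fun s => posSemidef_sum s fun m _ => hM m)

theorem PosSemidef.sum_mul_mul_nonneg {M : Matrix ι ι ℝ} (hM : M.PosSemidef) (c : ι → ℝ) :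
    0 ≤ ∑ i, ∑ j, c i * c j * M i j := by
  simpa [dotProduct, mulVec, mul_sum, mul_comm, mul_left_comm, mul_assoc]
    using hM.dotProduct_mulVec_nonneg c

theorem posSemidef_inner_pow (x : ι → E) (m : ℕ) :
    (of fun i j => ⟪x i, x j⟫_ℝ ^ m).PosSemidef := by
  induction m with
  | zero => simpa [vecMulVec] using posSemidef_vecMulVec_self_star (fun _ : ι => (1 : ℝ))
  | succ m ih =>
    have hpow : (of fun i j => ⟪x i, x j⟫_ℝ ^ (m + 1)) =
        (of fun i j => ⟪x i, x j⟫_ℝ ^ m) ⊙ gram ℝ x := by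
      ext i j; simp [pow_succ, gram]
    rw [hpow]
    exact ih.hadamard (posSemidef_gram ℝ x)

theorem posSemidef_exp_inner (x : ι → E) : (of fun i j => exp ⟪x i, x j⟫_ℝ).PosSemidef := by
  refine PosSemidef.of_hasSum
    (fun m => (posSemidef_inner_pow x m).smul (a := (m ! : ℝ)⁻¹) (by positivity)) ?_
  refine Pi.hasSum.2 fun i => Pi.hasSum.2 fun j => ?_
  simpa [exp_eq_exp_ℝ] using NormedSpace.exp_series_hasSum_exp' (𝕂 := ℝ) ⟪x i, x j⟫_ℝ

theorem posSemidef_exp_neg_mul_norm_sub_sq (x : ι → E) {t : ℝ} (ht : 0 ≤ t) :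
    (of fun i j => exp (-(t * ‖x i - x j‖ ^ 2))).PosSemidef := by
  classical
  -- `exp (-t‖xᵢ - xⱼ‖²) = exp (-t‖xᵢ‖²) * exp (2t⟪xᵢ, xⱼ⟫) * exp (-t‖xⱼ‖²)`
  have hG := (posSemidef_exp_inner fun i => √(2 * t) • x i).conjTranspose_mul_mul_same
    (diagonal fun i => exp (-(t * ‖x i‖ ^ 2)))
  convert hG using 1
  ext i j
  simp only [diagonal_conjTranspose, star_trivial, diagonal_mul, mul_diagonal, of_apply,
    real_inner_smul_left, real_inner_smul_right, ← mul_assoc,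
    mul_self_sqrt (by positivity : 0 ≤ 2 * t), ← exp_add]
  rw [norm_sub_sq_real]
  ring_nf

end Matrix

theorem integrableOn_one_sub_exp_mul_rpow {r : ℝ} (hr : 0 ≤ r) :
    IntegrableOn (fun s : ℝ => (1 - exp (-(s * r))) * s ^ (-(3 / 2 : ℝ))) (Ioi 0) := by
  have hmeas {μ : Measure ℝ} :
      AEStronglyMeasurable (fun s : ℝ => (1 - exp (-(s * r))) * s ^ (-(3 / 2 : ℝ))) μ :=
    (by fun_prop : Measurable _).aestronglyMeasurable
  have habs : ∀ s ∈ Ioi (0 : ℝ), ‖(1 - exp (-(s * r))) * s ^ (-(3 / 2 : ℝ))‖ =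
      (1 - exp (-(s * r))) * s ^ (-(3 / 2 : ℝ)) := fun s hs => by
    have : exp (-(s * r)) ≤ 1 := exp_le_one_iff.2 (by nlinarith [mem_Ioi.1 hs])
    exact Real.norm_of_nonneg (mul_nonneg (by linarith) (rpow_nonneg (le_of_lt hs) _))
  rw [← Ioc_union_Ioi_eq_Ioi zero_le_one]
  refine IntegrableOn.union ?_ ?_
  · have hdom : IntegrableOn (fun s : ℝ => r * s ^ (-(1 / 2 : ℝ))) (Ioc 0 1) :=
      ((intervalIntegrable_iff_integrableOn_Ioc_of_le zero_le_one).1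
        (intervalIntegral.intervalIntegrable_rpow' (by norm_num))).const_mul r
    refine hdom.mono' hmeas ((ae_restrict_iff' measurableSet_Ioc).2 (.of_forall fun s hs => ?_))
    have hs0 : 0 < s := hs.1
    rw [habs s hs0]
    have := add_one_le_exp (-(s * r))
    calc (1 - exp (-(s * r))) * s ^ (-(3 / 2 : ℝ)) ≤ s * r * s ^ (-(3 / 2 : ℝ)) := by
          gcongr; linarith
      _ = r * s ^ (-(1 / 2 : ℝ)) := by
          rw [mul_comm s r, mul_assoc, ← rpow_one_add' hs0.le (by norm_num)]; norm_num
  · have hdom : IntegrableOn (fun s : ℝ => s ^ (-(3 / 2 : ℝ))) (Ioi 1) :=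
      integrableOn_Ioi_rpow_of_lt (by norm_num) zero_lt_one
    refine hdom.mono' hmeas ((ae_restrict_iff' measurableSet_Ioi).2 (.of_forall fun s hs => ?_))
    have hs0 : (0 : ℝ) < s := zero_lt_one.trans hs
    rw [habs s hs0]
    have := exp_pos (-(s * r))
    calc (1 - exp (-(s * r))) * s ^ (-(3 / 2 : ℝ)) ≤ 1 * s ^ (-(3 / 2 : ℝ)) := by
          gcongr; linarith
      _ = s ^ (-(3 / 2 : ℝ)) := one_mul _

theorem integral_one_sub_exp_rpow_pos :
    0 < ∫ s in Ioi (0 : ℝ), (1 - exp (-s)) * s ^ (-(3 / 2 : ℝ)) := by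
  have hpos : ∀ s ∈ Ioi (0 : ℝ), 0 < (1 - exp (-s)) * s ^ (-(3 / 2 : ℝ)) := fun s hs =>
    mul_pos (by linarith [exp_lt_one_iff.2 (neg_lt_zero.2 hs)]) (rpow_pos_of_pos hs _)
  have hint := integrableOn_one_sub_exp_mul_rpow zero_le_one
  simp only [mul_one] at hint
  rw [setIntegral_pos_iff_support_of_nonneg_ae
    ((ae_restrict_iff' measurableSet_Ioi).2 (.of_forall fun s hs => (hpos s hs).le)) hint,
    inter_eq_right.2 fun s hs => Function.mem_support.2 (hpos s hs).ne', volume_Ioi]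
  exact ENNReal.zero_lt_top

theorem integral_one_sub_exp_mul_rpow {r : ℝ} (hr : 0 ≤ r) :
    ∫ s in Ioi (0 : ℝ), (1 - exp (-(s * r))) * s ^ (-(3 / 2 : ℝ)) =
      √r * ∫ s in Ioi (0 : ℝ), (1 - exp (-s)) * s ^ (-(3 / 2 : ℝ)) := by
  obtain rfl | hr := hr.eq_or_lt
  · simp
  have hscale : ∀ s ∈ Ioi (0 : ℝ), (1 - exp (-(s * r))) * s ^ (-(3 / 2 : ℝ)) =
      r ^ (3 / 2 : ℝ) * ((1 - exp (-(r * s))) * (r * s) ^ (-(3 / 2 : ℝ))) := fun s hs => by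
    rw [mul_rpow hr.le (le_of_lt hs), rpow_neg hr.le, mul_comm s r]
    field_simp
  have hsub := integral_comp_mul_left_Ioi (fun u => (1 - exp (-u)) * u ^ (-(3 / 2 : ℝ))) 0 hr
  rw [setIntegral_congr_fun measurableSet_Ioi hscale, integral_const_mul, hsub, mul_zero,
    smul_eq_mul, ← mul_assoc, sqrt_eq_rpow, ← rpow_neg_one, ← rpow_add hr]
  norm_num

theorem sum_mul_mul_norm_sub_nonpos (x : ι → E) {c : ι → ℝ} (hc : ∑ i, c i = 0) :
    ∑ i, ∑ j, c i * c j * ‖x i - x j‖ ≤ 0 := by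
  have hint (i j : ι) : IntegrableOn (fun s => c i * c j *
      ((1 - exp (-(s * ‖x i - x j‖ ^ 2))) * s ^ (-(3 / 2 : ℝ)))) (Ioi 0) :=
    (integrableOn_one_sub_exp_mul_rpow (by positivity)).const_mul _
  have hrepr : (∑ i, ∑ j, c i * c j * ‖x i - x j‖) *
        ∫ s in Ioi (0 : ℝ), (1 - exp (-s)) * s ^ (-(3 / 2 : ℝ)) =
      ∫ s in Ioi 0, ∑ i, ∑ j, c i * c j *
        ((1 - exp (-(s * ‖x i - x j‖ ^ 2))) * s ^ (-(3 / 2 : ℝ))) := by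
    rw [integral_finsetSum _ fun i _ => integrable_finsetSum _ fun j _ => hint i j,
      sum_mul]
    refine sum_congr rfl fun i _ => ?_
    rw [integral_finsetSum _ fun j _ => hint i j, sum_mul]
    refine sum_congr rfl fun j _ => ?_
    rw [integral_const_mul, integral_one_sub_exp_mul_rpow (by positivity),
      sqrt_sq (norm_nonneg _), mul_assoc]
  have hnonpos : ∫ s in Ioi 0, ∑ i, ∑ j, c i * c j *
      ((1 - exp (-(s * ‖x i - x j‖ ^ 2))) * s ^ (-(3 / 2 : ℝ))) ≤ 0 := by
    refine setIntegral_nonpos measurableSet_Ioi fun s hs => ?_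
    have hgauss := (posSemidef_exp_neg_mul_norm_sub_sq x (le_of_lt hs)).sum_mul_mul_nonneg c
    have hexpand : ∑ i, ∑ j, c i * c j * ((1 - exp (-(s * ‖x i - x j‖ ^ 2))) * s ^ (-(3 / 2 : ℝ))) =
        ((∑ i, c i) * (∑ j, c j) - ∑ i, ∑ j, c i * c j * exp (-(s * ‖x i - x j‖ ^ 2))) *
          s ^ (-(3 / 2 : ℝ)) := by
      rw [sum_mul_sum, ← sum_sub_distrib, sum_mul]
      refine sum_congr rfl fun i _ => ?_
      rw [← sum_sub_distrib, sum_mul]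
      exact sum_congr rfl fun j _ => by ring
    rw [hexpand, hc, zero_mul, zero_sub]
    simp only [of_apply] at hgauss
    exact mul_nonpos_of_nonpos_of_nonneg (neg_nonpos.2 hgauss) (rpow_nonneg (le_of_lt hs) _)
  exact nonpos_of_mul_nonpos_left (hrepr ▸ hnonpos) integral_one_sub_exp_rpow_pos

theorem sum_norm_sub_mul_inner_nonpos [FiniteDimensional ℝ F] (x : ι → E) (y : ι → F)
    (hy : ∑ i, y i = 0) :
    ∑ i, ∑ j, ‖x i - x j‖ * ⟪y i, y j⟫_ℝ ≤ 0 := by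
  let b := stdOrthonormalBasis ℝ F
  have hcoord (k) : ∑ i, ⟪y i, b k⟫_ℝ = 0 := by rw [← sum_inner, hy, inner_zero_left]
  calc ∑ i, ∑ j, ‖x i - x j‖ * ⟪y i, y j⟫_ℝ
      = ∑ i, ∑ j, ∑ k, ⟪y i, b k⟫_ℝ * ⟪y j, b k⟫_ℝ * ‖x i - x j‖ := by
        refine sum_congr rfl fun i _ => sum_congr rfl fun j _ => ?_
        rw [← b.sum_inner_mul_inner, mul_sum]
        exact sum_congr rfl fun k _ => by rw [real_inner_comm (y j)]; ring
    _ = ∑ k, ∑ i, ∑ j, ⟪y i, b k⟫_ℝ * ⟪y j, b k⟫_ℝ * ‖x i - x j‖ := by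
        simp_rw [sum_comm (γ := Fin _)]
    _ ≤ 0 := sum_nonpos fun k _ => sum_mul_mul_norm_sub_nonpos x (hcoord k)

section DoubleCenter

variable {n : ℕ}

theorem doubleCenter_add_add (f g : Fin n → ℝ) (r : Fin n → Fin n → ℝ) (i j : Fin n) :
    doubleCenter (fun i j => f i + g j + r i j) i j = doubleCenter r i j := by
  have hn : (n : ℝ) ≠ 0 := Nat.cast_ne_zero.2 i.pos.ne'
  simp only [doubleCenter, sum_add_distrib, sum_const, card_univ, Fintype.card_fin, nsmul_eq_mul,
    ← mul_sum]
  field_simp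
  ring

theorem doubleCenter_of_sum_eq_zero {w : Fin n → Fin n → ℝ} (hrow : ∀ i, ∑ j, w i j = 0)
    (hcol : ∀ j, ∑ i, w i j = 0) (i j : Fin n) : doubleCenter w i j = w i j := by
  simp [doubleCenter, hrow, hcol]

theorem sum_doubleCenter_mul_of_sum_eq_zero (a : Fin n → Fin n → ℝ) {w : Fin n → Fin n → ℝ}
    (hrow : ∀ i, ∑ j, w i j = 0) (hcol : ∀ j, ∑ i, w i j = 0) :
    ∑ i, ∑ j, doubleCenter a i j * w i j = ∑ i, ∑ j, a i j * w i j := by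
  have hcol' : ∑ i, ∑ j, (∑ k, a k j) / n * w i j = 0 := by
    rw [sum_comm]; simp [← mul_sum, hcol]
  simp [doubleCenter, add_mul, sub_mul, sum_add_distrib, sum_sub_distrib, ← mul_sum, hrow, hcol']

theorem sum_sub_inv_smul_sum (y : Fin n → F) (hn : n ≠ 0) :
    ∑ i, (y i - (n : ℝ)⁻¹ • ∑ k, y k) = 0 := by
  rw [sum_sub_distrib, sum_const, card_univ, Fintype.card_fin, ← Nat.cast_smul_eq_nsmul ℝ,
    smul_inv_smul₀ (Nat.cast_ne_zero.2 hn), sub_self]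

theorem doubleCenter_norm_sub_sq_div_two (y : Fin n → F) (i j : Fin n) :
    doubleCenter (fun i j => ‖y i - y j‖ ^ 2 / 2) i j =
      -⟪y i - (n : ℝ)⁻¹ • ∑ k, y k, y j - (n : ℝ)⁻¹ • ∑ k, y k⟫_ℝ := by
  set z : Fin n → F := fun i => y i - (n : ℝ)⁻¹ • ∑ k, y k with hz
  have hsum : ∑ i, z i = 0 := sum_sub_inv_smul_sum y i.pos.ne'
  have hsplit : (fun i j => ‖y i - y j‖ ^ 2 / 2) =
      fun i j => ‖z i‖ ^ 2 / 2 + ‖z j‖ ^ 2 / 2 + -⟪z i, z j⟫_ℝ := by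
    ext i j
    rw [show y i - y j = z i - z j by simp [hz], norm_sub_sq_real]
    ring
  rw [hsplit, doubleCenter_add_add (fun i => ‖z i‖ ^ 2 / 2) (fun j => ‖z j‖ ^ 2 / 2)]
  refine doubleCenter_of_sum_eq_zero (fun i => ?_) (fun j => ?_) i j
  · rw [sum_neg_distrib, ← inner_sum, hsum, inner_zero_right, neg_zero]
  · rw [sum_neg_distrib, ← sum_inner, hsum, inner_zero_left, neg_zero]

end DoubleCenter

/-- For any points `X_1,…,X_n ∈ ℝ^p` and `Y_1,…,Y_n ∈ ℝ^q`, the squared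
empirical martingale difference divergence is nonnegative: `MDD_n²(Y|X) ≥ 0`. -/
theorem mddnSq_nonneg {n p q : ℕ}
    (X : Fin n → EuclideanSpace ℝ (Fin p)) (Y : Fin n → EuclideanSpace ℝ (Fin q)) :
    0 ≤ mddnSq X Y := by
  rcases n.eq_zero_or_pos with rfl | hn
  · simp [mddnSq]
  set z := fun i => Y i - (n : ℝ)⁻¹ • ∑ k, Y k
  have hz : ∑ i, z i = 0 := sum_sub_inv_smul_sum Y hn.ne'
  have hrow (i) : ∑ j, ⟪z i, z j⟫_ℝ = 0 := by rw [← inner_sum, hz, inner_zero_right]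
  have hcol (j) : ∑ i, ⟪z i, z j⟫_ℝ = 0 := by rw [← sum_inner, hz, inner_zero_left]
  have hmdd : mddnSq X Y = -(∑ i, ∑ j, ‖X i - X j‖ * ⟪z i, z j⟫_ℝ) / (n : ℝ) ^ 2 := by
    simp only [mddnSq, doubleCenter_norm_sub_sq_div_two, mul_neg, sum_neg_distrib]
    exact congrArg (fun s => -s / (n : ℝ) ^ 2) (sum_doubleCenter_mul_of_sum_eq_zero _ hrow hcol)
  rw [hmdd]
  exact div_nonneg (neg_nonneg.2 (sum_norm_sub_mul_inner_nonpos X z hz)) (by positivity)
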